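/- arXiv:1903.06872 — 7 statements merged into one kernel-verified Lean document; each statement's English description precedes it below -/
import Mathlib

section
/- In the lattice Λ with Gram matrix [[2,4,5],[4,0,3],[5,3,2]] (basis L,F,T), there is no element D with D·D = 0, L·D = 2 and F·D = 0. -/
/-- In the lattice with Gram matrix `[[2,4,5],[4,0,3],[5,3,2]]`
(basis `L,F,T`), there is no element `D = xL+yF+zT` with `D·D = 0`,
`L·D = 2` and `F·D = 0`.  Here `D² = 2x²+8xy+10xz+6yz+2z²`,
`L·D = 2x+4y+5z`, `F·D = 4x+3z`. -/
theorem stmt_2 :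
    ¬ ∃ x y z : ℤ,
      2*x^2 + 8*x*y + 10*x*z + 6*y*z + 2*z^2 = 0 ∧
      2*x + 4*y + 5*z = 2 ∧
      4*x + 3*z = 0 := by
  rintro ⟨x, y, z, hsq, hL, hF⟩
  -- On the plane `F·D = 0` the form is `-70x²/9`: `9 D² = -70 x² + (22x+18y+6z)(F·D)`.
  have hx : x = 0 := by
    have h : 70 * x ^ 2 = 0 := by linear_combination -9 * hsq + (22*x + 18*y + 6*z) * hF
    simpa using h
  subst hx
  omega
end

section
/- Let V be a complex vector space of dimension 2n with non-degenerate alternating forms α, β such that β⁻¹∘α has n distinct eigenvalues with 2-dimensional eigenspaces V₁,…,Vₙ. Then for any choice of nonzero vectors v_i ∈ V_i (i = 1,…,n), the span ⟨v₁,…,vₙ⟩ is an n-dimensional subspace of V that is Lagrangian (i.e., totally isotropic of dimension n) for both α and β. -/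
/-!
Since `α = β(T·,·)` with both forms alternating, `T` is self-adjoint for `β`, so eigenvectors
of `T` for distinct eigenvalues are `β`-orthogonal; a single eigenvector is `β`-isotropic because
`β` is alternating. Hence `β`, and with it `α(vᵢ, vⱼ) = λᵢ β(vᵢ, vⱼ)`, vanishes on the span of
the `vᵢ`, which has dimension `n` because eigenvectors for distinct eigenvalues are linearly
independent.
-/

namespace LinearMap.BilinForm

variable {R M : Type*} [CommRing R] [AddCommGroup M] [Module R M]

theorem apply_eq_zero_of_mem_span_range {ι : Type*} {B : LinearMap.BilinForm R M} {v : ι → M}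
    (h : ∀ i j, B (v i) (v j) = 0) {x y : M}
    (hx : x ∈ Submodule.span R (Set.range v)) (hy : y ∈ Submodule.span R (Set.range v)) :
    B x y = 0 :=
  (Submodule.mem_bot R).mp <| BilinMap.apply_apply_mem_of_mem_span ⊥ _ _ B
    (by rintro _ ⟨i, rfl⟩ _ ⟨j, rfl⟩; exact (Submodule.mem_bot R).mpr (h i j)) x y hx hy

theorem apply_apply_eq_apply_apply_of_isAlt {α β : LinearMap.BilinForm R M} {T : Module.End R M}
    (hα : α.IsAlt) (hβ : β.IsAlt) (hT : ∀ x y, α x y = β (T x) y) (x y : M) :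
    β (T x) y = β x (T y) := by
  rw [← hT, ← LinearMap.IsAlt.neg hα y x, hT, ← LinearMap.IsAlt.neg hβ x (T y), neg_neg]

theorem apply_eq_zero_of_mem_eigenspace [NoZeroDivisors R] {β : LinearMap.BilinForm R M}
    {T : Module.End R M} (hT : ∀ x y, β (T x) y = β x (T y)) {μ ν : R} (hμν : μ ≠ ν) {x y : M}
    (hx : x ∈ T.eigenspace μ) (hy : y ∈ T.eigenspace ν) : β x y = 0 := by
  have h : μ * β x y = ν * β x y := by
    rw [Module.End.mem_eigenspace_iff] at hx hy
    simpa [hx, hy] using hT x y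
  exact (mul_eq_zero.mp (by rw [sub_mul, h, sub_self])).resolve_left (sub_ne_zero.mpr hμν)

end LinearMap.BilinForm

open LinearMap.BilinForm in
theorem stmt_4_general {V : Type*} [AddCommGroup V] [Module ℂ V] (n : ℕ)
    (α β : LinearMap.BilinForm ℂ V)
    (hαalt : α.IsAlt) (hβalt : β.IsAlt)
    (T : V →ₗ[ℂ] V) (hT : ∀ v w : V, α v w = β (T v) w)
    (lam : Fin n → ℂ) (hlam : Function.Injective lam)
    (v : Fin n → V)
    (hv : ∀ i : Fin n, v i ∈ Module.End.eigenspace T (lam i))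
    (hv0 : ∀ i : Fin n, v i ≠ 0) :
    Module.finrank ℂ ↥(Submodule.span ℂ (Set.range v)) = n ∧
    (∀ x ∈ Submodule.span ℂ (Set.range v), ∀ y ∈ Submodule.span ℂ (Set.range v),
      α x y = 0 ∧ β x y = 0) := by
  have hβ : ∀ i j, β (v i) (v j) = 0 := by
    intro i j
    rcases eq_or_ne i j with rfl | hij
    · exact hβalt _
    · exact apply_eq_zero_of_mem_eigenspace (apply_apply_eq_apply_apply_of_isAlt hαalt hβalt hT)
        (hlam.ne hij) (hv i) (hv j)
  have hα : ∀ i j, α (v i) (v j) = 0 := fun i j => by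
    rw [hT, Module.End.mem_eigenspace_iff.mp (hv i), map_smul, LinearMap.smul_apply, hβ,
      smul_zero]
  refine ⟨?_, fun x hx y hy =>
    ⟨apply_eq_zero_of_mem_span_range hα hx hy, apply_eq_zero_of_mem_span_range hβ hx hy⟩⟩
  rw [finrank_span_eq_card
    (Module.End.eigenvectors_linearIndependent' T lam hlam v fun i => ⟨hv i, hv0 i⟩),
    Fintype.card_fin]

/-- With `V ≅ ℂ^{2n}`, non-degenerate alternating forms `α, β`,
and `T = β⁻¹∘α` (i.e. `α(v,w) = β(Tv,w)`) having `n` distinct eigenvalues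
with 2-dimensional eigenspaces spanning `V`: for any choice of nonzero
eigenvectors `vᵢ` (one for each eigenvalue), the span `⟨v₁,…,vₙ⟩` is an
`n`-dimensional subspace of `V` on which both `α` and `β` vanish identically,
i.e. it is Lagrangian for both `α` and `β`. -/
theorem stmt_4 {V : Type*} [AddCommGroup V] [Module ℂ V] [FiniteDimensional ℂ V]
    (n : ℕ) (hdim : Module.finrank ℂ V = 2 * n)
    (α β : LinearMap.BilinForm ℂ V)
    (hαalt : α.IsAlt) (hβalt : β.IsAlt)
    (hαnd : α.Nondegenerate) (hβnd : β.Nondegenerate)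
    (T : V →ₗ[ℂ] V) (hT : ∀ v w : V, α v w = β (T v) w)
    (lam : Fin n → ℂ) (hlam : Function.Injective lam)
    (hdim2 : ∀ i : Fin n, Module.finrank ℂ (Module.End.eigenspace T (lam i)) = 2)
    (hspan : (⨆ i : Fin n, Module.End.eigenspace T (lam i)) = ⊤)
    (v : Fin n → V)
    (hv : ∀ i : Fin n, v i ∈ Module.End.eigenspace T (lam i))
    (hv0 : ∀ i : Fin n, v i ≠ 0) :
    Module.finrank ℂ ↥(Submodule.span ℂ (Set.range v)) = n ∧
    (∀ x ∈ Submodule.span ℂ (Set.range v), ∀ y ∈ Submodule.span ℂ (Set.range v),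
      α x y = 0 ∧ β x y = 0) :=
  stmt_4_general n α β hαalt hβalt T hT lam hlam v hv hv0
end

section
/- On the flag variety LF_α(1,2;V) (V ≅ ℂ⁶, α a non-degenerate skew form), with divisor classes H₁, H₂ satisfying the Segre-class relations H₁^i·(H₂−H₁)^{8−i} = (−1)^{5−i}·s_{5−i}(N)·H₁^i on ℙ(V)=ℙ⁵ where the Chern polynomial of the null-correlation bundle N is 1 + H₁²t² + H₁⁴t⁴, the intersection numbers are H₁⁵H₂³ = 1, H₁⁴H₂⁴ = 4, H₁³H₂⁵ = 9, H₁²H₂⁶ = 14, H₁H₂⁷ = 14. -/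
/-!
Since `H₁⁶ = 0`, the binomial expansion of `H₁ⁱ(H₂ - H₁)⁸⁻ⁱ` only involves the monomials
`H₁ʲH₂⁸⁻ʲ` with `i ≤ j ≤ 5`, with coefficient `1` on `H₁ⁱH₂⁸⁻ⁱ`. The Segre relations are thus a
unitriangular linear system in these intersection numbers, solved from `i = 5` downwards.
-/

open Finset

theorem pow_mul_sub_pow {R : Type*} [CommRing R] (x y : R) (k n : ℕ) :
    x ^ k * (y - x) ^ n =
      ∑ j ∈ range (n + 1), ((-1) ^ j * n.choose j : ℤ) • (x ^ (k + j) * y ^ (n - j)) := by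
  rw [sub_eq_neg_add, add_pow, mul_sum]
  refine sum_congr rfl fun j _ => ?_
  rw [neg_pow, zsmul_eq_mul]
  push_cast
  ring

theorem AddMonoidHom.map_pow_mul_sub_pow {R : Type*} [CommRing R] (f : R →+ ℤ) (x y : R)
    (k n : ℕ) :
    f (x ^ k * (y - x) ^ n) =
      ∑ j ∈ Finset.range (n + 1), (-1) ^ j * n.choose j * f (x ^ (k + j) * y ^ (n - j)) := by
  simp only [pow_mul_sub_pow, map_sum, map_zsmul, smul_eq_mul]

theorem stmt_9_general {R : Type*} [CommRing R] (H1 H2 : R) (deg : R →+ ℤ)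
    (hP5 : deg (H1 ^ 5) = 1)
    (hvan : H1 ^ 6 = 0)
    (h5 : deg (H1 ^ 5 * (H2 - H1) ^ 3) = deg (H1 ^ 5))
    (h4 : deg (H1 ^ 4 * (H2 - H1) ^ 4) = 0)
    (h3 : deg (H1 ^ 3 * (H2 - H1) ^ 5) = deg (-(H1 ^ 2) * H1 ^ 3))
    (h2 : deg (H1 ^ 2 * (H2 - H1) ^ 6) = 0)
    (h1 : deg (H1 * (H2 - H1) ^ 7) = 0) :
    deg (H1 ^ 5 * H2 ^ 3) = 1 ∧ deg (H1 ^ 4 * H2 ^ 4) = 4 ∧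
    deg (H1 ^ 3 * H2 ^ 5) = 9 ∧ deg (H1 ^ 2 * H2 ^ 6) = 14 ∧
    deg (H1 * H2 ^ 7) = 14 := by
  have hnil : ∀ m, 6 ≤ m → H1 ^ m = 0 := fun m hm => pow_eq_zero_of_le hm hvan
  nth_rw 1 [← pow_one H1] at h1
  rw [deg.map_pow_mul_sub_pow] at h1 h2 h3 h4 h5
  rw [neg_mul, ← pow_add, map_neg] at h3
  norm_num [sum_range_succ, Nat.choose, hnil, hP5] at h1 h2 h3 h4 h5
  exact ⟨by linarith, by linarith, by linarith, by linarith, by linarith⟩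

/-- Intersection numbers on `LF_α(1,2;V)`.  Work in a
commutative ring (the Chow ring) with degree map `deg : R →+ ℤ`, classes
`H₁, H₂`, the Segre-class relations
`H₁^i·(H₂−H₁)^{8−i} = (−1)^{5−i}·s_{5−i}(N)·H₁^i` where the Chern polynomial
of the null-correlation bundle `N` is `1 + H₁²t² + H₁⁴t⁴` (so `s₀ = 1`,
`s₁ = s₃ = s₄ = s₅ = 0`, `s₂ = −H₁²`), with `deg(H₁⁵) = 1` and `H₁⁶ = 0`
(on `ℙ⁵`).  Then `H₁⁵H₂³ = 1`, `H₁⁴H₂⁴ = 4`, `H₁³H₂⁵ = 9`, `H₁²H₂⁶ = 14`,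
`H₁H₂⁷ = 14`. -/
theorem stmt_9 {R : Type*} [CommRing R] (H1 H2 : R) (deg : R →+ ℤ)
    (hP5 : deg (H1 ^ 5) = 1)
    (hvan : H1 ^ 6 = 0)
    (h5 : deg (H1 ^ 5 * (H2 - H1) ^ 3) = deg (H1 ^ 5))
    (h4 : deg (H1 ^ 4 * (H2 - H1) ^ 4) = 0)
    (h3 : deg (H1 ^ 3 * (H2 - H1) ^ 5) = deg (-(H1 ^ 2) * H1 ^ 3))
    (h2 : deg (H1 ^ 2 * (H2 - H1) ^ 6) = 0)
    (h1 : deg (H1 * (H2 - H1) ^ 7) = 0)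
    (h0 : deg ((H2 - H1) ^ 8) = 0) :
    deg (H1 ^ 5 * H2 ^ 3) = 1 ∧ deg (H1 ^ 4 * H2 ^ 4) = 4 ∧
    deg (H1 ^ 3 * H2 ^ 5) = 9 ∧ deg (H1 ^ 2 * H2 ^ 6) = 14 ∧
    deg (H1 * H2 ^ 7) = 14 :=
  stmt_9_general H1 H2 deg hP5 hvan h5 h4 h3 h2 h1
end

section
/- Let c₁ = 4H₁ − 2E and c₂ = 2(3H₁² − 3H₁E + E²) in a commutative ring where H₁²E = 0, H₁⁵ = 1, H₁E⁴ = −3, E⁵ = −12 (and all degree-5 monomials not of these forms determined by these relations, i.e., H₁²E³ = H₁³E² = H₁⁴E = 0). Then c₁⁵ − 4c₁³c₂ + 3c₁c₂² = 16. -/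
/-!
Modulo `H₁²E` every monomial of degree five other than `H₁⁵`, `H₁E⁴`, `E⁵` vanishes, and
expanding gives `c₁⁵ − 4c₁³c₂ + 3c₁c₂² ≡ −80 H₁⁵ − 64 H₁E⁴ + 8 E⁵`, whose degree is
`−80 + 192 − 96 = 16`.
-/

theorem neg_segre_five_eq_of_sq_mul_eq_zero {R : Type*} [CommRing R] {H E : R}
    (h : H ^ 2 * E = 0) :
    (4*H - 2*E) ^ 5 - 4 * (4*H - 2*E) ^ 3 * (2*(3*H^2 - 3*H*E + E^2))
        + 3 * (4*H - 2*E) * (2*(3*H^2 - 3*H*E + E^2)) ^ 2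
      = (-80 : ℤ) • H ^ 5 + (-64 : ℤ) • (H * E ^ 4) + (8 : ℤ) • E ^ 5 := by
  simp only [zsmul_eq_mul, Int.cast_neg, Int.cast_ofNat]
  linear_combination (200*H^2 - 256*H*E + 184*E^2) * h

/-- With `c₁ = 4H₁ − 2E` and `c₂ = 2(3H₁² − 3H₁E + E²)` in a
commutative ring with degree map where `H₁²E = 0`, `deg(H₁⁵) = 1`,
`deg(H₁E⁴) = −3`, `deg(E⁵) = −12` (so `H₁²E³ = H₁³E² = H₁⁴E = 0`), one has
`deg(c₁⁵ − 4c₁³c₂ + 3c₁c₂²) = 16`. -/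
theorem stmt_11 {R : Type*} [CommRing R] (H1 E : R) (deg : R →+ ℤ)
    (hrel : H1 ^ 2 * E = 0)
    (d5 : deg (H1 ^ 5) = 1)
    (d14 : deg (H1 * E ^ 4) = -3)
    (dE5 : deg (E ^ 5) = -12) :
    deg ((4*H1 - 2*E) ^ 5 - 4 * (4*H1 - 2*E) ^ 3 * (2*(3*H1^2 - 3*H1*E + E^2))
        + 3 * (4*H1 - 2*E) * (2*(3*H1^2 - 3*H1*E + E^2)) ^ 2) = 16 := by
  rw [neg_segre_five_eq_of_sq_mul_eq_zero hrel]
  simp only [map_add, map_zsmul, d5, d14, dE5]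
  norm_num
end

section
/- On ℙ³ with homogeneous coordinates x,y,z,w, let I = (xz, xw, yz, yw) be the ideal sheaf of the disjoint union of the two lines {x=y=0} and {z=w=0}. Then there exists a surjection of sheaves Ω¹_{ℙ³} → I (after suitable twist: Hom(Ω¹_{ℙ³}, I) is 1-dimensional and any nonzero homomorphism is surjective). -/
/-!
Split the Euler form `Σ xᵢ fᵢ` into `ψ(f) = x₂f₂ + x₃f₃` and the rest. On syzygies `f` of
`(x₀, x₁, x₂, x₃)` the value `ψ(f) = -(x₀f₀ + x₁f₁)` lies in `(x₀, x₁) ∩ (x₂, x₃)`, which is the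
product `(x₀, x₁)(x₂, x₃) = I` because both are monomial ideals in disjoint sets of variables.
Conversely `ψ` sends the Koszul syzygy `xᵢ eⱼ - xⱼ eᵢ` (`i ∈ {0,1}`, `j ∈ {2,3}`) to `xᵢxⱼ`,
so `ψ` maps the syzygy module onto `I`.
-/

open MvPolynomial

namespace MvPolynomial

variable {σ R : Type*} [CommSemiring R]

theorem span_X_image_inf_span_X_image_le_mul {s t : Set σ} (hst : Disjoint s t) :
    Ideal.span (X '' s) ⊓ Ideal.span (X '' t) ≤
      (Ideal.span (X '' s) * Ideal.span (X '' t) : Ideal (MvPolynomial σ R)) := by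
  classical
  rintro p ⟨hs, ht⟩
  rw [SetLike.mem_coe, mem_ideal_span_X_image] at hs ht
  have hp : p ∈ Ideal.span ((fun m => monomial m (1 : R)) ''
      {m | ∃ i ∈ s, ∃ j ∈ t, m = Finsupp.single i 1 + Finsupp.single j 1}) := by
    rw [mem_ideal_span_monomial_image]
    intro m hm
    obtain ⟨i, hi, hmi⟩ := hs m hm
    obtain ⟨j, hj, hmj⟩ := ht m hm
    have hij : i ≠ j := hst.ne_of_mem hi hj
    refine ⟨_, ⟨i, hi, j, hj, rfl⟩, fun k => ?_⟩
    simp only [Finsupp.add_apply, Finsupp.single_apply]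
    split_ifs <;> grind
  refine Ideal.span_le.2 ?_ hp
  rintro _ ⟨_, ⟨i, hi, j, hj, rfl⟩, rfl⟩
  show monomial (Finsupp.single i 1 + Finsupp.single j 1) (1 : R) ∈ _
  rw [← one_mul (1 : R), ← monomial_mul]
  exact Ideal.mul_mem_mul (Ideal.subset_span ⟨i, hi, rfl⟩) (Ideal.subset_span ⟨j, hj, rfl⟩)

end MvPolynomial

section PartialEuler

variable {ι R : Type*} [CommRing R] (x : ι → R)

/-- `f ↦ Σ_{i ∈ t} xᵢ fᵢ`; for `t = univ` this is the Euler map `R^ι → R`. -/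
def partialEuler (t : Finset ι) : (ι → R) →ₗ[R] R := ∑ i ∈ t, x i • LinearMap.proj i

theorem partialEuler_apply (t : Finset ι) (f : ι → R) :
    partialEuler x t f = ∑ i ∈ t, x i * f i := by
  simp [partialEuler]

theorem partialEuler_mem_span_image (t : Finset ι) (f : ι → R) :
    partialEuler x t f ∈ Ideal.span (x '' t) := by
  rw [partialEuler_apply]
  exact Ideal.sum_mem _ fun i hi => Ideal.mul_mem_right _ _ (Ideal.subset_span ⟨i, hi, rfl⟩)

theorem partialEuler_single [DecidableEq ι] (t : Finset ι) (j : ι) :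
    partialEuler x t (Pi.single j 1) = if j ∈ t then x j else 0 := by
  simp [partialEuler_apply, Pi.single_apply]

def koszulSyzygy [DecidableEq ι] (i j : ι) : ι → R := x i • Pi.single j 1 - x j • Pi.single i 1

theorem partialEuler_koszulSyzygy [DecidableEq ι] {t : Finset ι} {i j : ι} (hi : i ∉ t)
    (hj : j ∈ t) : partialEuler x t (koszulSyzygy x i j) = x i * x j := by
  simp [koszulSyzygy, partialEuler_single, hi, hj]

variable [Fintype ι] [DecidableEq ι]

theorem partialEuler_add_partialEuler_compl (t : Finset ι) (f : ι → R) :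
    partialEuler x t f + partialEuler x tᶜ f = partialEuler x Finset.univ f := by
  simp only [partialEuler_apply, Finset.sum_add_sum_compl]

theorem koszulSyzygy_mem_ker (i j : ι) :
    koszulSyzygy x i j ∈ LinearMap.ker (partialEuler x Finset.univ) := by
  simp [koszulSyzygy, partialEuler_single, mul_comm]

theorem partialEuler_mem_inf_of_mem_ker (t : Finset ι) {f : ι → R}
    (hf : f ∈ LinearMap.ker (partialEuler x Finset.univ)) :
    partialEuler x t f ∈ Ideal.span (x '' ↑tᶜ) ⊓ Ideal.span (x '' t) := by
  have h := partialEuler_add_partialEuler_compl x t f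
  rw [LinearMap.mem_ker.1 hf, add_eq_zero_iff_eq_neg] at h
  refine ⟨?_, partialEuler_mem_span_image x t f⟩
  rw [SetLike.mem_coe, h]
  exact neg_mem (partialEuler_mem_span_image x tᶜ f)

theorem mul_le_range_partialEuler_comp_subtype_ker (t : Finset ι) :
    Ideal.span (x '' ↑tᶜ) * Ideal.span (x '' t) ≤
      LinearMap.range (partialEuler x t ∘ₗ (LinearMap.ker (partialEuler x Finset.univ)).subtype) := by
  rw [Ideal.span_mul_span', Ideal.span_le]
  rintro _ ⟨_, ⟨i, hi, rfl⟩, _, ⟨j, hj, rfl⟩, rfl⟩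
  exact ⟨⟨_, koszulSyzygy_mem_ker x i j⟩, partialEuler_koszulSyzygy x (Finset.mem_compl.1 hi) hj⟩

end PartialEuler

theorem MvPolynomial.range_partialEuler_X_comp_subtype_ker {σ R : Type*} [CommRing R]
    [Fintype σ] [DecidableEq σ] (t : Finset σ) :
    LinearMap.range (partialEuler (X : σ → MvPolynomial σ R) t ∘ₗ
        (LinearMap.ker (partialEuler X Finset.univ)).subtype) =
      Ideal.span (X '' ↑tᶜ) * Ideal.span (X '' t) := by
  refine le_antisymm ?_ (mul_le_range_partialEuler_comp_subtype_ker X t)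
  rintro _ ⟨f, rfl⟩
  refine span_X_image_inf_span_X_image_le_mul ?_ (partialEuler_mem_inf_of_mem_ker X t f.2)
  rw [Finset.coe_compl]
  exact disjoint_compl_left

open MvPolynomial in
/-- On `ℙ³` with coordinates `x,y,z,w`, let
`I = (xz, xw, yz, yw)` be the ideal of the disjoint union of the lines
`{x=y=0}` and `{z=w=0}`.  There is a surjection `Ω¹_{ℙ³} → I` (after a
suitable twist).  At the level of graded modules over
`R = ℂ[x,y,z,w]`, the module of `Ω¹_{ℙ³}` is the kernel `Ω` of the Euler map
`R⁴ → R`, `(f₀,f₁,f₂,f₃) ↦ Σ xᵢfᵢ`, and the claim is that there exists a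
surjective `R`-module homomorphism `Ω → I`. -/
theorem stmt_16 :
    let R := MvPolynomial (Fin 4) ℂ
    let ε : (Fin 4 → R) →ₗ[R] R := ∑ i : Fin 4, (MvPolynomial.X i : R) • (LinearMap.proj i : (Fin 4 → R) →ₗ[R] R)
    let Ω := LinearMap.ker ε
    let I : Ideal R := Ideal.span
      {MvPolynomial.X 0 * MvPolynomial.X 2, MvPolynomial.X 0 * MvPolynomial.X 3,
       MvPolynomial.X 1 * MvPolynomial.X 2, MvPolynomial.X 1 * MvPolynomial.X 3}
    ∃ φ : Ω →ₗ[R] I, Function.Surjective φ := by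
  intro R ε Ω I
  let t : Finset (Fin 4) := {2, 3}
  have hI : I = Ideal.span (X '' ↑tᶜ) * Ideal.span (X '' t) := by
    rw [show tᶜ = {0, 1} by decide, Ideal.span_mul_span', ← Set.image2_mul]
    simp only [t, Finset.coe_insert, Finset.coe_singleton, Set.image_insert_eq,
      Set.image_singleton, Set.image2_insert_left, Set.image2_singleton_left, Set.insert_union,
      Set.singleton_union]
    rfl
  let ψ : Ω →ₗ[R] R := partialEuler X t ∘ₗ Ω.subtype
  have hψ : LinearMap.range ψ = I := (range_partialEuler_X_comp_subtype_ker t).trans hI.symm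
  exact ⟨(LinearEquiv.ofEq _ _ hψ).toLinearMap ∘ₗ ψ.rangeRestrict,
    (LinearEquiv.ofEq _ _ hψ).surjective.comp ψ.surjective_rangeRestrict⟩
end

section
/- On ℙ³ with coordinates x,y,z,w, let I = (x², xy, y², xz + yw). Then I is the ideal of a double structure on the line l = {x = y = 0} isomorphic to l × Spec ℂ[ε]/(ε²), it satisfies (x,y)² ⊆ I ⊆ (x,y), h⁰(ℙ³, I(2)) = 4, and I admits the free resolution 0 → O(−4) → O(−3)⁴ → O(−2)⁴ → I → 0 with maps A₂ = (z,w,x,−y)ᵀ, A₁ the given 4×4 matrix, A₀ = (x², xy, y², xz+yw). -/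
open MvPolynomial Matrix

namespace Stmt17Aux

noncomputable abbrev RR := MvPolynomial (Fin 4) ℂ

/-! ### Substitution killing one variable, and divisibility -/

noncomputable def kill (i : Fin 4) : RR →ₐ[ℂ] RR :=
  aeval (fun j => if j = i then 0 else X j)

@[simp] lemma kill_X_self (i : Fin 4) : kill i (X i) = 0 := by simp [kill]

lemma kill_X_ne {i j : Fin 4} (h : j ≠ i) : kill i (X j) = X j := by simp [kill, h]

lemma X_dvd_sub_kill (i : Fin 4) (f : RR) : X i ∣ f - kill i f := by
  induction f using MvPolynomial.induction_on with
  | C a => simp [kill]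
  | add p q hp hq =>
      have h := dvd_add hp hq
      have heq : p + q - kill i (p + q) = (p - kill i p) + (q - kill i q) := by
        rw [map_add]; ring
      rwa [heq]
  | mul_X p j hp =>
      by_cases hj : j = i
      · subst hj
        rw [_root_.map_mul, kill_X_self, mul_zero, sub_zero]
        exact dvd_mul_left _ _
      · rw [_root_.map_mul, kill_X_ne hj]
        have heq : p * X j - kill i p * X j = (p - kill i p) * X j := by ring
        rw [heq]
        exact hp.mul_right _

lemma X_dvd_of_kill (i : Fin 4) {f : RR} (h : kill i f = 0) : X i ∣ f := by
  have h2 := X_dvd_sub_kill i f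
  rwa [h, sub_zero] at h2

/-! ### Syzygies of regular sequences of variables -/

lemma syz2 {i j : Fin 4} (hij : i ≠ j) {a b : RR} (h : a * X i + b * X j = 0) :
    ∃ t, a = X j * t ∧ b = -(X i * t) := by
  have h2 : kill j a * X i = 0 := by
    have h3 := congrArg (kill j) h
    simp only [map_add, _root_.map_mul, kill_X_self, kill_X_ne hij, mul_zero, add_zero, map_zero] at h3
    exact h3
  have ha : kill j a = 0 := (mul_eq_zero.mp h2).resolve_right (X_ne_zero i)
  obtain ⟨t, ht⟩ := X_dvd_of_kill j ha
  refine ⟨t, ht, ?_⟩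
  have h4 : X j * (t * X i + b) = 0 := by rw [ht] at h; linear_combination h
  have h5 := (mul_eq_zero.mp h4).resolve_left (X_ne_zero j)
  linear_combination h5

lemma syz3 {i j k : Fin 4} (hij : i ≠ j) (hik : i ≠ k) (hjk : j ≠ k)
    {a b c : RR} (h : a * X i + b * X j + c * X k = 0) :
    ∃ p q r, a = p * X j + q * X k ∧ b = -(p * X i) + r * X k ∧ c = -(q * X i) - r * X j := by
  have h1 : kill i b * X j + kill i c * X k = 0 := by
    have h3 := congrArg (kill i) h
    simp only [map_add, _root_.map_mul, kill_X_self, kill_X_ne hij.symm, kill_X_ne hik.symm,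
      mul_zero, zero_add, map_zero] at h3
    exact h3
  obtain ⟨t, hb', hc'⟩ := syz2 hjk h1
  obtain ⟨b1, hb1⟩ := X_dvd_sub_kill i b
  obtain ⟨c1, hc1⟩ := X_dvd_sub_kill i c
  have hb : b = X k * t + X i * b1 := by linear_combination hb1 + hb'
  have hc : c = -(X j * t) + X i * c1 := by linear_combination hc1 + hc'
  have h4 : X i * (a + b1 * X j + c1 * X k) = 0 := by
    linear_combination h - X j * hb - X k * hc
  have ha := (mul_eq_zero.mp h4).resolve_left (X_ne_zero i)
  exact ⟨-b1, -c1, t, by linear_combination ha, by linear_combination hb, by linear_combination hc⟩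

/-! ### The matrices -/

noncomputable def A0m : Matrix (Fin 1) (Fin 4) RR :=
  Matrix.of ![![X 0^2, X 0*X 1, X 1^2, X 0*X 2 + X 1*X 3]]
noncomputable def A1m : Matrix (Fin 4) (Fin 4) RR :=
  Matrix.of ![![-X 1, 0, 0, -X 2], ![X 0, -X 1, -X 2, -X 3], ![0, X 0, -X 3, 0], ![0, 0, X 1, X 0]]
noncomputable def A2m : Matrix (Fin 4) (Fin 1) RR := Matrix.of ![![X 2], ![X 3], ![X 0], ![-X 1]]

lemma hA01 : A0m * A1m = 0 := by
  apply Matrix.ext; intro i j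
  fin_cases i <;> fin_cases j <;>
    (simp [A0m, A1m, Matrix.mul_apply, Fin.sum_univ_four, Matrix.vecHead, Matrix.vecTail]; ring)

lemma hA12 : A1m * A2m = 0 := by
  apply Matrix.ext; intro i j
  fin_cases i <;> fin_cases j <;>
    (simp [A1m, A2m, Matrix.mul_apply, Fin.sum_univ_four, Matrix.vecHead, Matrix.vecTail]; ring)

lemma hInj : Function.Injective (Matrix.mulVecLin A2m) := by
  intro u v huv
  have h := congrFun huv 2
  simp [A2m, Matrix.mulVecLin_apply, Matrix.mulVec, dotProduct, Matrix.vecHead,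
    Matrix.vecTail, Fin.sum_univ_one] at h
  funext i
  obtain rfl : i = 0 := Subsingleton.elim i 0
  exact h

lemma hEx21 : Function.Exact (Matrix.mulVecLin A2m) (Matrix.mulVecLin A1m) := by
  intro v
  constructor
  · intro h
    have h0 := congrFun h 0
    have h2 := congrFun h 2
    have h3 := congrFun h 3
    simp [A1m, Matrix.mulVecLin_apply, Matrix.mulVec, dotProduct, Fin.sum_univ_four,
      Matrix.vecHead, Matrix.vecTail] at h0 h2 h3
    have e4 : v 2 * X 1 + v 3 * X 0 = 0 := by linear_combination h3
    obtain ⟨t, h2t, h3t⟩ := syz2 (show (1 : Fin 4) ≠ 0 by decide) e4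
    have e0 : X 1 * (v 0 - X 2 * t) = 0 := by linear_combination -h0 - X 2 * h3t
    have e2 : X 0 * (v 1 - X 3 * t) = 0 := by linear_combination h2 + X 3 * h2t
    have hv0 := sub_eq_zero.mp ((mul_eq_zero.mp e0).resolve_left (X_ne_zero 1))
    have hv1 := sub_eq_zero.mp ((mul_eq_zero.mp e2).resolve_left (X_ne_zero 0))
    refine ⟨![t], ?_⟩
    funext i
    fin_cases i <;>
      simp [A2m, Matrix.mulVecLin_apply, Matrix.mulVec, dotProduct, Matrix.vecHead,
        Matrix.vecTail, Fin.sum_univ_one]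
    · linear_combination -hv0
    · linear_combination -hv1
    · linear_combination -h2t
    · linear_combination -h3t
  · rintro ⟨u, rfl⟩
    rw [Matrix.mulVecLin_apply, Matrix.mulVecLin_apply, Matrix.mulVec_mulVec, hA12,
      Matrix.zero_mulVec]

lemma hEx10 : Function.Exact (Matrix.mulVecLin A1m) (Matrix.mulVecLin A0m) := by
  intro v
  constructor
  · intro h
    have hE := congrFun h 0
    simp [A0m, Matrix.mulVecLin_apply, Matrix.mulVec, dotProduct, Fin.sum_univ_four,
      Matrix.vecHead, Matrix.vecTail] at hE
    have E1 : (X 0 * v 0 + X 1 * v 1 + X 2 * v 3) * X 0 + (X 1 * v 2 + X 3 * v 3) * X 1 = 0 := by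
      linear_combination hE
    obtain ⟨e, hA, hB⟩ := syz2 (show (0 : Fin 4) ≠ 1 by decide) E1
    have E2 : v 0 * X 0 + (v 1 - e) * X 1 + v 3 * X 2 = 0 := by linear_combination hA
    obtain ⟨p, q, r, h1, h2, h3⟩ := syz3 (show (0 : Fin 4) ≠ 1 by decide)
      (show (0 : Fin 4) ≠ 2 by decide) (show (1 : Fin 4) ≠ 2 by decide) E2
    have E3 : v 2 * X 1 + v 3 * X 3 + e * X 0 = 0 := by linear_combination hB
    obtain ⟨α, β, γ, h4, h5, h6⟩ := syz3 (show (1 : Fin 4) ≠ 3 by decide)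
      (show (1 : Fin 4) ≠ 0 by decide) (show (3 : Fin 4) ≠ 0 by decide) E3
    have E4 : (-q - γ) * X 0 + (α - r) * X 1 = 0 := by linear_combination h5 - h3
    obtain ⟨s, hs1, hs2⟩ := syz2 (show (0 : Fin 4) ≠ 1 by decide) E4
    refine ⟨![-p, β - s * X 3, -r, -q], ?_⟩
    funext i
    fin_cases i <;>
      simp [A1m, Matrix.mulVecLin_apply, Matrix.mulVec, dotProduct, Matrix.vecHead,
        Matrix.vecTail, Fin.sum_univ_four]
    · linear_combination -h1
    · linear_combination -h2 - h6 - X 3 * hs1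
    · linear_combination -h4 - X 3 * hs2
    · linear_combination -h3
  · rintro ⟨u, rfl⟩
    rw [Matrix.mulVecLin_apply, Matrix.mulVecLin_apply, Matrix.mulVec_mulVec, hA01,
      Matrix.zero_mulVec]

/-! ### The ideal -/

noncomputable def vgen : Fin 4 → RR := ![X 0^2, X 0*X 1, X 1^2, X 0*X 2 + X 1*X 3]

lemma hrangeSet :
    Set.range vgen = {X 0^2, X 0*X 1, X 1^2, X 0*X 2 + X 1*X 3} := by
  ext f
  constructor
  · rintro ⟨i, rfl⟩
    fin_cases i <;> simp [vgen]
  · intro hf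
    rcases hf with rfl | rfl | rfl | rfl
    · exact ⟨0, rfl⟩
    · exact ⟨1, rfl⟩
    · exact ⟨2, rfl⟩
    · exact ⟨3, rfl⟩

lemma hspan :
    Ideal.span {X 0^2, X 0*X 1, X 1^2, X 0*X 2 + X 1*X 3} = Submodule.span RR (Set.range vgen) := by
  rw [hrangeSet]

lemma hRange (g : Fin 1 → RR) :
    g ∈ LinearMap.range (Matrix.mulVecLin A0m) ↔
      g 0 ∈ Ideal.span {X 0^2, X 0*X 1, X 1^2, X 0*X 2 + X 1*X 3} := by
  constructor
  · rintro ⟨c, rfl⟩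
    rw [hspan, Submodule.mem_span_range_iff_exists_fun]
    refine ⟨c, ?_⟩
    simp [A0m, vgen, Matrix.mulVecLin_apply, Matrix.mulVec, dotProduct, Fin.sum_univ_four,
      Matrix.vecHead, Matrix.vecTail, smul_eq_mul]
    ring
  · intro hg
    rw [hspan, Submodule.mem_span_range_iff_exists_fun] at hg
    obtain ⟨c, hc⟩ := hg
    refine ⟨c, ?_⟩
    funext i
    obtain rfl : i = 0 := Subsingleton.elim i 0
    rw [← hc]
    simp [A0m, vgen, Matrix.mulVecLin_apply, Matrix.mulVec, dotProduct, Fin.sum_univ_four,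
      Matrix.vecHead, Matrix.vecTail, smul_eq_mul]
    ring

lemma hsq :
    (Ideal.span {(X 0 : RR), X 1}) ^ 2 ≤ Ideal.span {X 0^2, X 0*X 1, X 1^2, X 0*X 2 + X 1*X 3} := by
  rw [pow_two, Ideal.mul_le]
  intro a ha b hb
  rw [Ideal.mem_span_pair] at ha hb
  obtain ⟨p, q, rfl⟩ := ha
  obtain ⟨r, s, rfl⟩ := hb
  have heq : (p * X 0 + q * X 1) * (r * X 0 + s * X 1) =
      (p * r) * (X 0^2) + (p * s + q * r) * (X 0 * X 1) + (q * s) * (X 1^2) := by ring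
  rw [heq]
  have m1 : (X 0^2 : RR) ∈ Ideal.span {X 0^2, X 0*X 1, X 1^2, X 0*X 2 + X 1*X 3} :=
    Ideal.subset_span (by simp)
  have m2 : (X 0 * X 1 : RR) ∈ Ideal.span {X 0^2, X 0*X 1, X 1^2, X 0*X 2 + X 1*X 3} :=
    Ideal.subset_span (by simp)
  have m3 : (X 1^2 : RR) ∈ Ideal.span {X 0^2, X 0*X 1, X 1^2, X 0*X 2 + X 1*X 3} :=
    Ideal.subset_span (by simp)
  exact add_mem (add_mem (Ideal.mul_mem_left _ _ m1) (Ideal.mul_mem_left _ _ m2))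
    (Ideal.mul_mem_left _ _ m3)

lemma hsub :
    Ideal.span {(X 0 : RR)^2, X 0*X 1, X 1^2, X 0*X 2 + X 1*X 3} ≤ Ideal.span {X 0, X 1} := by
  rw [Ideal.span_le]
  rintro f (rfl | rfl | rfl | rfl) <;> rw [SetLike.mem_coe, Ideal.mem_span_pair]
  · exact ⟨X 0, 0, by ring⟩
  · exact ⟨X 1, 0, by ring⟩
  · exact ⟨0, X 1, by ring⟩
  · exact ⟨X 2, X 3, by ring⟩

/-! ### The degree two part -/

lemma hhomog (i : Fin 4) : vgen i ∈ homogeneousSubmodule (Fin 4) ℂ 2 := by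
  have hx : ∀ j : Fin 4, (X j : RR).IsHomogeneous 1 := fun j => isHomogeneous_X ℂ j
  fin_cases i
  · show (X 0 ^ 2 : RR) ∈ homogeneousSubmodule (Fin 4) ℂ 2
    rw [mem_homogeneousSubmodule, pow_two]
    exact (hx 0).mul (hx 0)
  · show (X 0 * X 1 : RR) ∈ homogeneousSubmodule (Fin 4) ℂ 2
    rw [mem_homogeneousSubmodule]
    exact (hx 0).mul (hx 1)
  · show (X 1 ^ 2 : RR) ∈ homogeneousSubmodule (Fin 4) ℂ 2
    rw [mem_homogeneousSubmodule, pow_two]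
    exact (hx 1).mul (hx 1)
  · show (X 0 * X 2 + X 1 * X 3 : RR) ∈ homogeneousSubmodule (Fin 4) ℂ 2
    rw [mem_homogeneousSubmodule]
    exact ((hx 0).mul (hx 2)).add ((hx 1).mul (hx 3))

lemma hc_mul {c e : RR} (he : e ∈ homogeneousSubmodule (Fin 4) ℂ 2) :
    (homogeneousComponent 2) (c * e) = C (constantCoeff c) * e := by
  classical
  have hsplit : c * e = C (constantCoeff c) * e + (c - C (constantCoeff c)) * e := by ring
  have hzero : (homogeneousComponent 2) ((c - C (constantCoeff c)) * e) = 0 := by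
    apply homogeneousComponent_eq_zero'
    intro d hd
    obtain ⟨d1, hd1, d2, hd2, rfl⟩ := Finset.mem_add.mp (support_mul _ _ hd)
    have h1 : d1 ≠ 0 := by
      intro h0
      apply mem_support_iff.mp hd1
      rw [h0]
      simp [coeff_sub, constantCoeff_eq]
    have hdeg1 : 1 ≤ d1.degree := by
      rcases Nat.eq_zero_or_pos d1.degree with h' | h'
      · exact absurd ((Finsupp.degree_eq_zero_iff d1).mp h') h1
      · exact h'
    have hdeg2 : d2.degree = 2 := by
      by_contra hne
      exact mem_support_iff.mp hd2
        (((mem_homogeneousSubmodule _ _).mp he).coeff_eq_zero hne)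
    have hadd : (d1 + d2).degree = d1.degree + d2.degree := by
      simp [Finsupp.degree_eq_weight_one, map_add]
    omega
  rw [hsplit, map_add, homogeneousComponent_C_mul, homogeneousComponent_of_mem he, if_pos rfl,
    hzero, add_zero]

lemma hSeq :
    Submodule.restrictScalars ℂ
        ((Ideal.span {(X 0 : RR)^2, X 0*X 1, X 1^2, X 0*X 2 + X 1*X 3} : Ideal RR) :
          Submodule RR RR) ⊓
      homogeneousSubmodule (Fin 4) ℂ 2 = Submodule.span ℂ (Set.range vgen) := by
  apply le_antisymm
  · rintro f hf
    rw [Submodule.mem_inf] at hf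
    obtain ⟨hf1, hf2⟩ := hf
    rw [Submodule.restrictScalars_mem] at hf1
    rw [hspan, Submodule.mem_span_range_iff_exists_fun] at hf1
    obtain ⟨c, hc⟩ := hf1
    have hf : f = ∑ i, C (constantCoeff (c i)) * vgen i := by
      calc f = (homogeneousComponent 2) f := by
              rw [homogeneousComponent_of_mem hf2, if_pos rfl]
        _ = (homogeneousComponent 2) (∑ i, c i • vgen i) := by rw [hc]
        _ = ∑ i, (homogeneousComponent 2) (c i • vgen i) := map_sum _ _ _
        _ = ∑ i, C (constantCoeff (c i)) * vgen i := by
              refine Finset.sum_congr rfl fun i _ => ?_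
              rw [smul_eq_mul, hc_mul (hhomog i)]
    rw [hf]
    apply Submodule.sum_mem
    intro i _
    rw [← smul_eq_C_mul]
    exact Submodule.smul_mem _ _ (Submodule.subset_span ⟨i, rfl⟩)
  · rw [Submodule.span_le]
    rintro f ⟨i, rfl⟩
    rw [SetLike.mem_coe, Submodule.mem_inf]
    refine ⟨?_, hhomog i⟩
    rw [Submodule.restrictScalars_mem]
    show vgen i ∈ Ideal.span {(X 0 : RR)^2, X 0*X 1, X 1^2, X 0*X 2 + X 1*X 3}
    rw [hspan]
    exact Submodule.subset_span ⟨i, rfl⟩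

lemma hLI : LinearIndependent ℂ vgen := by
  rw [Fintype.linearIndependent_iff]
  intro g hg
  rw [Fin.sum_univ_four] at hg
  have hg' : C (g 0) * (X 0^2) + C (g 1) * (X 0 * X 1) + C (g 2) * (X 1^2) +
      C (g 3) * (X 0 * X 2 + X 1 * X 3) = (0 : RR) := by
    rw [← hg]
    simp [vgen, smul_eq_C_mul]
    ring
  have e1 := congrArg (eval ![1, 0, 0, 0]) hg'
  have e2 := congrArg (eval ![0, 1, 0, 0]) hg'
  have e3 := congrArg (eval ![1, 1, 0, 0]) hg'
  have e4 := congrArg (eval ![1, 0, 1, 0]) hg'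
  simp [Matrix.vecHead, Matrix.vecTail] at e1 e2 e3 e4
  intro i
  fin_cases i
  · show g 0 = 0; linear_combination e1
  · show g 1 = 0; linear_combination e3 - e1 - e2
  · show g 2 = 0; linear_combination e2
  · show g 3 = 0; linear_combination e4 - e1

lemma hdim :
    Module.finrank ℂ
      ↥(Submodule.restrictScalars ℂ
          ((Ideal.span {(X 0 : RR)^2, X 0*X 1, X 1^2, X 0*X 2 + X 1*X 3} : Ideal RR) :
            Submodule RR RR) ⊓
        homogeneousSubmodule (Fin 4) ℂ 2) = 4 := by
  rw [hSeq, finrank_span_eq_card hLI]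
  simp

end Stmt17Aux


open MvPolynomial Matrix in
/-- On `ℙ³` with coordinates `x,y,z,w`, let
`I = (x², xy, y², xz + yw)`, the ideal of a double structure on the line
`{x = y = 0}`.  Then `(x,y)² ⊆ I ⊆ (x,y)`, the degree-2 graded piece of `I`
has dimension 4 (i.e. `h⁰(ℙ³, I(2)) = 4`), and `I` admits the free
resolution `0 → R(−4) →A₂ R(−3)⁴ →A₁ R(−2)⁴ →A₀ I → 0` with
`A₂ = (z,w,x,−y)ᵀ`, `A₁ = [[−y,0,0,−z],[x,−y,−z,−w],[0,x,−w,0],[0,0,y,x]]`,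
`A₀ = (x², xy, y², xz+yw)`: that is, `A₀A₁ = 0`, `A₁A₂ = 0`, the complex is
exact, `A₂` is injective, and the image of `A₀` is exactly `I`. -/
theorem stmt_17 :
    let R := MvPolynomial (Fin 4) ℂ
    let x : R := MvPolynomial.X 0
    let y : R := MvPolynomial.X 1
    let z : R := MvPolynomial.X 2
    let w : R := MvPolynomial.X 3
    let I : Ideal R := Ideal.span {x^2, x*y, y^2, x*z + y*w}
    let A0 : Matrix (Fin 1) (Fin 4) R := Matrix.of ![![x^2, x*y, y^2, x*z + y*w]]
    let A1 : Matrix (Fin 4) (Fin 4) R :=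
      Matrix.of ![![-y, 0, 0, -z], ![x, -y, -z, -w], ![0, x, -w, 0], ![0, 0, y, x]]
    let A2 : Matrix (Fin 4) (Fin 1) R := Matrix.of ![![z], ![w], ![x], ![-y]]
    A0 * A1 = 0 ∧
    A1 * A2 = 0 ∧
    Function.Injective A2.mulVecLin ∧
    Function.Exact A2.mulVecLin A1.mulVecLin ∧
    Function.Exact A1.mulVecLin A0.mulVecLin ∧
    (∀ g : Fin 1 → R, g ∈ LinearMap.range A0.mulVecLin ↔ g 0 ∈ I) ∧
    (Ideal.span {x, y}) ^ 2 ≤ I ∧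
    I ≤ Ideal.span {x, y} ∧
    Module.finrank ℂ
      ↥(Submodule.restrictScalars ℂ (I : Submodule R R) ⊓
        MvPolynomial.homogeneousSubmodule (Fin 4) ℂ 2) = 4 := by
  intro R x y z w I A0 A1 A2
  exact ⟨Stmt17Aux.hA01, Stmt17Aux.hA12, Stmt17Aux.hInj, Stmt17Aux.hEx21, Stmt17Aux.hEx10,
    Stmt17Aux.hRange, Stmt17Aux.hsq, Stmt17Aux.hsub, Stmt17Aux.hdim⟩
end

section
/- Let W̄ ⊂ ℙ⁵ be the cubic hypersurface {x₀x₂x₄ + x₁x₃x₅ = 0}. On the affine chart U₀ = {x₀ ≠ 0} ≅ 𝔸⁵, the affine variety W̄₀ = {x₂x₄ + x₁x₃x₅ = 0} admits the involution ι : (x₁,x₂,x₃,x₄,x₅) ↦ (x₁,x₄,x₃,x₂,x₅), and the quotient W̄₀/⟨ι⟩ is isomorphic to 𝔸⁴. -/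
open MvPolynomial

noncomputable def Tsub : Subalgebra ℂ (MvPolynomial (Fin 5) ℂ) :=
  Algebra.adjoin ℂ {X 0, X 2, X 4, X 1 + X 3, X 1 * X 3}

lemma L1 : ∀ n : ℕ, (X 1 ^ n + X 3 ^ n : MvPolynomial (Fin 5) ℂ) ∈ Tsub := by
  intro n
  induction n using Nat.strong_induction_on with
  | _ n ih =>
    match n with
    | 0 => simpa using Tsub.add_mem Tsub.one_mem Tsub.one_mem
    | 1 => have h1 : (X 1 + X 3 : MvPolynomial (Fin 5) ℂ) ∈ Tsub := Algebra.subset_adjoin (by simp [Set.mem_insert_iff] : (X 1 + X 3 : MvPolynomial (Fin 5) ℂ) ∈ _); simpa using h1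
    | (n+2) =>
      have h : (X 1 ^ (n+2) + X 3 ^ (n+2) : MvPolynomial (Fin 5) ℂ)
          = (X 1 + X 3) * (X 1 ^ (n+1) + X 3 ^ (n+1)) - (X 1 * X 3) * (X 1 ^ n + X 3 ^ n) := by
        ring
      rw [h]
      exact Tsub.sub_mem
        (Tsub.mul_mem (Algebra.subset_adjoin (by simp [Set.mem_insert_iff])) (ih (n+1) (by omega)))
        (Tsub.mul_mem (Algebra.subset_adjoin (by simp [Set.mem_insert_iff])) (ih n (by omega)))

lemma L2 : ∀ a b : ℕ, (X 1 ^ a * X 3 ^ b + X 1 ^ b * X 3 ^ a : MvPolynomial (Fin 5) ℂ) ∈ Tsub := by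
  intro a
  induction a with
  | zero => intro b; simpa [add_comm] using L1 b
  | succ a ih =>
    intro b
    match b with
    | 0 => simpa using L1 (a+1)
    | (b+1) =>
      have h : (X 1 ^ (a+1) * X 3 ^ (b+1) + X 1 ^ (b+1) * X 3 ^ (a+1) : MvPolynomial (Fin 5) ℂ)
          = (X 1 * X 3) * (X 1 ^ a * X 3 ^ b + X 1 ^ b * X 3 ^ a) := by ring
      rw [h]
      exact Tsub.mul_mem (Algebra.subset_adjoin (by simp [Set.mem_insert_iff])) (ih b)

lemma Lmain : ∀ p : MvPolynomial (Fin 5) ℂ,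
    p + rename (Equiv.swap (1 : Fin 5) 3) p ∈ Tsub := by
  intro p
  induction p using MvPolynomial.induction_on' with
  | add p q hp hq =>
    have h : (p + q) + rename (Equiv.swap (1:Fin 5) 3) (p + q)
        = (p + rename (Equiv.swap (1:Fin 5) 3) p) + (q + rename (Equiv.swap (1:Fin 5) 3) q) := by
      rw [map_add]; ring
    rw [h]; exact Tsub.add_mem hp hq
  | monomial d c =>
    rw [rename_monomial]
    have hmap : ∀ i, (Finsupp.mapDomain (Equiv.swap (1:Fin 5) 3) d) i = d (Equiv.swap (1:Fin 5) 3 i) := by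
      intro i
      rw [show ((Equiv.swap (1:Fin 5) 3) i) = (Equiv.swap (1:Fin 5) 3).symm i from by simp,
        ← Finsupp.mapDomain_equiv_apply]
    have hm : ∀ (e : Fin 5 →₀ ℕ), (monomial e c : MvPolynomial (Fin 5) ℂ)
        = C c * (X 0 ^ e 0 * X 1 ^ e 1 * X 2 ^ e 2 * X 3 ^ e 3 * X 4 ^ e 4) := fun e => by
      rw [monomial_eq, Finsupp.prod_fintype _ _ (fun i => pow_zero _), Fin.prod_univ_five]
    rw [hm, hm, hmap, hmap, hmap, hmap, hmap]
    have h0 : (Equiv.swap (1:Fin 5) 3) 0 = 0 := by decide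
    have h1 : (Equiv.swap (1:Fin 5) 3) 1 = 3 := by decide
    have h2 : (Equiv.swap (1:Fin 5) 3) 2 = 2 := by decide
    have h3 : (Equiv.swap (1:Fin 5) 3) 3 = 1 := by decide
    have h4 : (Equiv.swap (1:Fin 5) 3) 4 = 4 := by decide
    rw [h0, h1, h2, h3, h4]
    have key : C c * (X 0 ^ d 0 * X 1 ^ d 1 * X 2 ^ d 2 * X 3 ^ d 3 * X 4 ^ d 4)
        + C c * (X 0 ^ d 0 * X 1 ^ d 3 * X 2 ^ d 2 * X 3 ^ d 1 * X 4 ^ d 4)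
        = (C c * (X 0 ^ d 0 * X 2 ^ d 2 * X 4 ^ d 4)) *
          (X 1 ^ d 1 * X 3 ^ d 3 + X 1 ^ d 3 * X 3 ^ d 1 : MvPolynomial (Fin 5) ℂ) := by ring
    rw [key]
    refine Tsub.mul_mem (Tsub.mul_mem (Tsub.algebraMap_mem c |>.out) ?_) (L2 _ _)
    exact Tsub.mul_mem (Tsub.mul_mem
      (Tsub.pow_mem (Algebra.subset_adjoin (by simp [Set.mem_insert_iff])) _)
      (Tsub.pow_mem (Algebra.subset_adjoin (by simp [Set.mem_insert_iff])) _))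
      (Tsub.pow_mem (Algebra.subset_adjoin (by simp [Set.mem_insert_iff])) _)

set_option maxHeartbeats 2000000

/-- Let `W̄₀ = Spec ℂ[x₁,…,x₅]/(x₂x₄ + x₁x₃x₅)` (the affine
chart `{x₀ ≠ 0}` of the cubic `{x₀x₂x₄ + x₁x₃x₅ = 0} ⊂ ℙ⁵`), with the
involution `ι` swapping `x₂` and `x₄`.  Then the invariant subring
`W̄₀/⟨ι⟩` is a polynomial ring in 4 variables, i.e. the fixed subalgebra of
`ι` is `ℂ`-algebra isomorphic to `ℂ[t₁,t₂,t₃,t₄]`.  (Variables: `x₁,…,x₅`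
are `X 0,…,X 4`, so `x₂,x₄` are `X 1, X 3`.) -/
theorem stmt_18
    (I : Ideal (MvPolynomial (Fin 5) ℂ))
    (hI : I = Ideal.span
      {MvPolynomial.X 1 * MvPolynomial.X 3 +
        MvPolynomial.X 0 * MvPolynomial.X 2 * MvPolynomial.X 4})
    (ι : (MvPolynomial (Fin 5) ℂ ⧸ I) ≃ₐ[ℂ] (MvPolynomial (Fin 5) ℂ ⧸ I))
    (hι : ∀ p : MvPolynomial (Fin 5) ℂ,
      ι (Ideal.Quotient.mk I p) =
        Ideal.Quotient.mk I (MvPolynomial.rename (Equiv.swap (1 : Fin 5) 3) p)) :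
    Nonempty
      (↥(AlgHom.equalizer ι.toAlgHom (AlgHom.id ℂ (MvPolynomial (Fin 5) ℂ ⧸ I)))
        ≃ₐ[ℂ] MvPolynomial (Fin 4) ℂ) := by
  classical
  set mk := Ideal.Quotient.mk I with hmk
  set v : Fin 4 → (MvPolynomial (Fin 5) ℂ ⧸ I) :=
    ![mk (X 0), mk (X 1 + X 3), mk (X 2), mk (X 4)] with hv
  set Φ : MvPolynomial (Fin 4) ℂ →ₐ[ℂ] (MvPolynomial (Fin 5) ℂ ⧸ I) := aeval v with hΦ
  have hfI : (X 1 * X 3 + X 0 * X 2 * X 4 : MvPolynomial (Fin 5) ℂ) ∈ I := by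
    rw [hI]; exact Ideal.subset_span rfl
  -- ### injectivity of Φ via AdjoinRoot
  set g : Polynomial (MvPolynomial (Fin 4) ℂ) := Polynomial.X ^ 2 -
      (Polynomial.C (X 1) * Polynomial.X + Polynomial.C (X 0 * X 2 * X 3)) with hg
  have hgmonic : g.Monic := by rw [hg]; monicity!
  have hgnd : g.natDegree = 2 := by rw [hg]; compute_degree!
  have hroot : (AdjoinRoot.root g) ^ 2 =
      AdjoinRoot.of g (X 1) * AdjoinRoot.root g + AdjoinRoot.of g (X 0 * X 2 * X 3) := by
    have h0 := AdjoinRoot.mk_self (f := g)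
    rw [hg, map_sub, map_add, map_mul (AdjoinRoot.mk _), map_pow, AdjoinRoot.mk_X,
      AdjoinRoot.mk_C, AdjoinRoot.mk_C, sub_eq_zero] at h0
    rw [← hg] at h0
    exact h0
  set w : Fin 5 → AdjoinRoot g :=
    ![AdjoinRoot.of g (X 0), AdjoinRoot.root g, AdjoinRoot.of g (X 2),
      AdjoinRoot.of g (X 1) - AdjoinRoot.root g, AdjoinRoot.of g (X 3)] with hw
  have haev : aeval w (X 1 * X 3 + X 0 * X 2 * X 4 : MvPolynomial (Fin 5) ℂ) = 0 := by
    simp only [map_add, map_mul, aeval_X, hw]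
    simp only [Matrix.cons_val_zero, Matrix.cons_val_one, Matrix.head_cons,
      Matrix.cons_val_two, Matrix.tail_cons, Matrix.cons_val_three, Matrix.cons_val_four]
    have h3 : AdjoinRoot.of g (X 0 * X 2 * X 3) =
        AdjoinRoot.of g (X 0) * AdjoinRoot.of g (X 2) * AdjoinRoot.of g (X 3) := by
      rw [map_mul, map_mul]
    linear_combination -hroot - h3
  have hker : ∀ a ∈ I, aeval w a = 0 := by
    rw [hI]
    intro a ha
    rcases Ideal.mem_span_singleton.mp ha with ⟨c, rfl⟩
    rw [map_mul, haev, zero_mul]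
  set ψ := Ideal.Quotient.liftₐ I (aeval w) hker with hψ
  have hψmk : ∀ p, ψ (mk p) = aeval w p := fun p => by
    rw [hψ, Ideal.Quotient.liftₐ_apply, hmk]; exact Ideal.Quotient.lift_mk I _ _
  have heq : ψ.comp Φ = IsScalarTower.toAlgHom ℂ (MvPolynomial (Fin 4) ℂ) (AdjoinRoot g) := by
    apply MvPolynomial.algHom_ext
    intro i
    fin_cases i <;>
      simp [hΦ, hψmk, hv, hw, AdjoinRoot.algebraMap_eq]
  have hcomp : ∀ b, ψ (Φ b) = AdjoinRoot.of g b := fun b => by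
    have h := congrArg (fun f => f b) heq
    simpa [AdjoinRoot.algebraMap_eq] using h
  have hofinj : Function.Injective (AdjoinRoot.of g) := by
    intro x y hxy
    by_contra hne
    have hC : Polynomial.C (x - y) ≠ 0 := by
      simpa [sub_eq_zero] using hne
    have hmk0 : AdjoinRoot.mk g (Polynomial.C (x - y)) = 0 := by
      rw [Polynomial.C_sub, map_sub, AdjoinRoot.mk_C, AdjoinRoot.mk_C]
      rw [sub_eq_zero]
      exact hxy
    have hdvd : g ∣ Polynomial.C (x - y) := (AdjoinRoot.mk_eq_zero).mp hmk0
    have hle := Polynomial.degree_le_of_dvd hdvd hC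
    rw [Polynomial.degree_C (sub_ne_zero.mpr hne),
      Polynomial.degree_eq_natDegree hgmonic.ne_zero, hgnd] at hle
    exact absurd hle (by decide)
  have hΦinj : Function.Injective Φ := by
    intro x y hxy
    exact hofinj (by rw [← hcomp, ← hcomp, hxy])
  -- ### range of Φ ≤ equalizer
  have hrle : Φ.range ≤ AlgHom.equalizer ι.toAlgHom
      (AlgHom.id ℂ (MvPolynomial (Fin 5) ℂ ⧸ I)) := by
    have e0 : (Equiv.swap (1:Fin 5) 3) 0 = 0 := by decide
    have e1 : (Equiv.swap (1:Fin 5) 3) 1 = 3 := by decide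
    have e2 : (Equiv.swap (1:Fin 5) 3) 2 = 2 := by decide
    have e4 : (Equiv.swap (1:Fin 5) 3) 3 = 1 := by decide
    have e5 : (Equiv.swap (1:Fin 5) 3) 4 = 4 := by decide
    have key : ∀ i : Fin 4, ι.toAlgHom (v i) = AlgHom.id ℂ _ (v i) := by
      intro i
      fin_cases i
      · show ι (mk (X 0)) = mk (X 0)
        rw [hι, rename_X, e0]
      · show ι (mk (X 1 + X 3)) = mk (X 1 + X 3)
        rw [hι, map_add, rename_X, rename_X, e1, e4, add_comm]
      · show ι (mk (X 2)) = mk (X 2)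
        rw [hι, rename_X, e2]
      · show ι (mk (X 4)) = mk (X 4)
        rw [hι, rename_X, e5]
    rw [hΦ, ← Algebra.adjoin_range_eq_range_aeval]
    apply Algebra.adjoin_le
    rintro x ⟨i, rfl⟩
    rw [SetLike.mem_coe, AlgHom.mem_equalizer]
    exact key i
  -- ### equalizer ≤ range of Φ
  have hTle : ∀ q ∈ Tsub, mk q ∈ Φ.range := by
    have hgen : ∀ x ∈ ({X 0, X 2, X 4, X 1 + X 3, X 1 * X 3} :
        Set (MvPolynomial (Fin 5) ℂ)), mk x ∈ Φ.range := by
      intro x hx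
      simp only [Set.mem_insert_iff, Set.mem_singleton_iff] at hx
      have h0 : Φ (X 0) = mk (X 0) := by rw [hΦ, aeval_X]; simp only [aeval_X, hv, Matrix.cons_val_zero, Matrix.cons_val_one, Matrix.head_cons, Matrix.cons_val_two, Matrix.tail_cons, Matrix.cons_val_three]
      have h1 : Φ (X 2) = mk (X 2) := by rw [hΦ, aeval_X]; simp only [aeval_X, hv, Matrix.cons_val_zero, Matrix.cons_val_one, Matrix.head_cons, Matrix.cons_val_two, Matrix.tail_cons, Matrix.cons_val_three]
      have h2 : Φ (X 3) = mk (X 4) := by rw [hΦ, aeval_X]; simp only [aeval_X, hv, Matrix.cons_val_zero, Matrix.cons_val_one, Matrix.head_cons, Matrix.cons_val_two, Matrix.tail_cons, Matrix.cons_val_three]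
      have h3 : Φ (X 1) = mk (X 1 + X 3) := by rw [hΦ, aeval_X]; simp only [aeval_X, hv, Matrix.cons_val_zero, Matrix.cons_val_one, Matrix.head_cons, Matrix.cons_val_two, Matrix.tail_cons, Matrix.cons_val_three]
      rcases hx with rfl|rfl|rfl|rfl|rfl
      · exact ⟨X 0, h0⟩
      · exact ⟨X 2, h1⟩
      · exact ⟨X 3, h2⟩
      · exact ⟨X 1, h3⟩
      · refine ⟨-(X 0 * X 2 * X 3), ?_⟩
        have hz : mk (X 1 * X 3 + X 0 * X 2 * X 4) = 0 :=
          Ideal.Quotient.eq_zero_iff_mem.mpr hfI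
        rw [map_add, map_mul mk, map_mul mk, map_mul mk] at hz
        show Φ (-(X 0 * X 2 * X 3)) = mk (X 1 * X 3)
        rw [map_neg Φ, map_mul Φ, map_mul Φ, h0, h1, h2, map_mul mk]
        linear_combination -hz
    intro q hq
    have := Algebra.adjoin_le (S := Φ.range.comap (Ideal.Quotient.mkₐ ℂ I))
      (fun x hx => by
        rw [SetLike.mem_coe, Subalgebra.mem_comap, Ideal.Quotient.mkₐ_eq_mk]
        exact hgen x hx) hq
    rwa [Subalgebra.mem_comap, Ideal.Quotient.mkₐ_eq_mk] at this
  have heqle : AlgHom.equalizer ι.toAlgHom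
      (AlgHom.id ℂ (MvPolynomial (Fin 5) ℂ ⧸ I)) ≤ Φ.range := by
    intro a ha
    rw [AlgHom.mem_equalizer] at ha
    obtain ⟨p, rfl⟩ := Ideal.Quotient.mk_surjective a
    have ha' : ι (mk p) = mk p := by simpa using ha
    have h1 : mk (rename (Equiv.swap (1:Fin 5) 3) p) = mk p := (hι p).symm.trans ha'
    have h2 : mk (C (2⁻¹:ℂ)) * 2 = 1 := by
      rw [show (2 : MvPolynomial (Fin 5) ℂ ⧸ I) = mk 2 from (map_ofNat mk 2).symm,
        ← map_mul,
        show (C (2⁻¹:ℂ) * 2 : MvPolynomial (Fin 5) ℂ) = 1 from by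
          rw [show (2 : MvPolynomial (Fin 5) ℂ) = C 2 from (map_ofNat C 2).symm, ← map_mul]
          norm_num,
        map_one]
    have hq : mk (C (2⁻¹ : ℂ) * (p + rename (Equiv.swap (1:Fin 5) 3) p)) = mk p := by
      rw [map_mul, map_add, h1]
      linear_combination (mk p) * h2
    have hmem : mk (C (2⁻¹ : ℂ) * (p + rename (Equiv.swap (1:Fin 5) 3) p)) ∈ Φ.range := by
      exact hTle _ (Tsub.mul_mem (Tsub.algebraMap_mem (2⁻¹:ℂ)) (Lmain p))
    rw [hq] at hmem
    exact hmem
  have hrange : Φ.range = AlgHom.equalizer ι.toAlgHom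
      (AlgHom.id ℂ (MvPolynomial (Fin 5) ℂ ⧸ I)) := le_antisymm hrle heqle
  exact ⟨(Subalgebra.equivOfEq _ _ hrange.symm).trans (AlgEquiv.ofInjective Φ hΦinj).symm⟩
end
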